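/- arXiv:0806.1854 — 3 statements merged into one kernel-verified Lean document; each statement's English description precedes it below -/
import Mathlib

section
/- Let ħ, m, k₀ > 0 and let V + f = v₁ + f₁ + i(v₂ + f₂) with v₁, f₁, v₂, f₂ real. If k ∈ ℂ and s ∈ ℂ satisfy the system iħs = −(ħ²/(2m))k² + (V+f) and iħs = −iħ√(2ħ/m)·k₀·k − ħk₀² + (V+f), then k = i√(2m/ħ)·k₀ and s = −i k₀² − i(v₁+f₁)/ħ + (v₂+f₂)/ħ. In particular Re(s) ≤ 0 whenever v₂ + f₂ ≤ 0. -/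
/-! The difference of the two relations is, after multiplying by `-2m/ħ²`, the perfect square
`(k - i√(2m/ħ)k₀)² = 0`, because `√(2m/ħ)·√(2ħ/m) = 2`: the interior and boundary relations
share a double root in `k`. Substituting it into the boundary relation gives
`iħs = ħk₀² + (V+f)`, whose real part is `(v₂+f₂)/ħ`. -/

open Complex

theorem Real.sqrt_mul_div_mul_sqrt_mul_div {c x y : ℝ} (hc : 0 ≤ c) (hx : 0 < x) (hy : 0 < y) :
    √(c * x / y) * √(c * y / x) = c := by
  rw [← Real.sqrt_mul (by positivity), show c * x / y * (c * y / x) = c * c by field_simp,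
    Real.sqrt_mul_self hc]

theorem wavenumber_eq_of_dispersion_of_boundary {hbar m a b k₀ k E W : ℂ} (hhbar : hbar ≠ 0)
    (hm : m ≠ 0) (ha : a ^ 2 * hbar = 2 * m) (hab : a * b = 2)
    (h1 : E = -(hbar ^ 2 / (2 * m)) * k ^ 2 + W)
    (h2 : E = -I * hbar * b * k₀ * k - hbar * k₀ ^ 2 + W) :
    k = I * a * k₀ := by
  have hsq : hbar ^ 2 * (k - I * a * k₀) ^ 2 = 0 := by
    field_simp at h1
    linear_combination h1 - 2 * m * h2 + a ^ 2 * k₀ ^ 2 * hbar ^ 2 * I_sq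
      - (hbar * k₀ ^ 2 + I * hbar * b * k₀ * k) * ha + I * hbar ^ 2 * a * k₀ * k * hab
  have hdouble := (mul_eq_zero.mp hsq).resolve_left (pow_ne_zero 2 hhbar)
  exact sub_eq_zero.mp (pow_eq_zero_iff two_ne_zero |>.mp hdouble)

theorem frequency_eq_of_boundary {hbar a b k₀ k s W : ℂ} (hhbar : hbar ≠ 0) (hab : a * b = 2)
    (hk : k = I * a * k₀) (h2 : I * hbar * s = -I * hbar * b * k₀ * k - hbar * k₀ ^ 2 + W) :
    s = -I * k₀ ^ 2 - I * W / hbar := by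
  have h : I * hbar * s = hbar * k₀ ^ 2 + W := by
    rw [h2, hk]
    linear_combination (-I ^ 2 * hbar * k₀ ^ 2) * hab - 2 * hbar * k₀ ^ 2 * I_sq
  field_simp
  linear_combination (-I) * h + (hbar * s) * I_sq

theorem stmt_6_general (hbar m k₀ v₁ f₁ v₂ f₂ : ℝ) (hhbar : 0 < hbar) (hm : 0 < m)
    (k s : ℂ)
    (h1 : Complex.I * hbar * s = -((hbar^2/(2*m) : ℝ) : ℂ) * k^2 +
      (((v₁+f₁ : ℝ) : ℂ) + Complex.I * ((v₂+f₂ : ℝ) : ℂ)))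
    (h2 : Complex.I * hbar * s = -Complex.I * hbar * (Real.sqrt (2*hbar/m) : ℝ) * k₀ * k
      - (hbar : ℂ) * (k₀ : ℂ)^2 + (((v₁+f₁ : ℝ) : ℂ) + Complex.I * ((v₂+f₂ : ℝ) : ℂ))) :
    k = Complex.I * (Real.sqrt (2*m/hbar) : ℝ) * k₀ ∧
    s = -Complex.I * (k₀ : ℂ)^2 - Complex.I * (((v₁+f₁)/hbar : ℝ) : ℂ) + (((v₂+f₂)/hbar : ℝ) : ℂ) ∧
    (v₂ + f₂ ≤ 0 → s.re ≤ 0) := by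
  have hhbarC : (hbar : ℂ) ≠ 0 := ofReal_ne_zero.mpr hhbar.ne'
  have ha : ((√(2 * m / hbar) : ℝ) : ℂ) ^ 2 * hbar = 2 * m := by
    rw [← ofReal_pow, Real.sq_sqrt (by positivity)]
    push_cast
    field_simp
  have hab : ((√(2 * m / hbar) : ℝ) : ℂ) * ((√(2 * hbar / m) : ℝ) : ℂ) = 2 := by
    exact_mod_cast Real.sqrt_mul_div_mul_sqrt_mul_div zero_le_two hm hhbar
  have hk := wavenumber_eq_of_dispersion_of_boundary hhbarC (ofReal_ne_zero.mpr hm.ne') ha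
    hab (by exact_mod_cast h1) h2
  have hs := frequency_eq_of_boundary hhbarC hab hk h2
  have hs_parts :
      s = -I * (k₀ : ℂ)^2 - I * (((v₁+f₁)/hbar : ℝ) : ℂ) + (((v₂+f₂)/hbar : ℝ) : ℂ) := by
    rw [hs]
    push_cast
    field_simp
    linear_combination (-(v₂ + f₂ : ℂ)) * I_sq
  refine ⟨hk, hs_parts, fun hv => ?_⟩
  rw [hs_parts]
  simpa [← ofReal_pow] using div_nonpos_of_nonpos_of_nonneg hv hhbar.le

theorem stmt_6 (hbar m k₀ v₁ f₁ v₂ f₂ : ℝ) (hhbar : 0 < hbar) (hm : 0 < m) (hk₀ : 0 < k₀)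
    (k s : ℂ)
    (h1 : Complex.I * hbar * s = -((hbar^2/(2*m) : ℝ) : ℂ) * k^2 +
      (((v₁+f₁ : ℝ) : ℂ) + Complex.I * ((v₂+f₂ : ℝ) : ℂ)))
    (h2 : Complex.I * hbar * s = -Complex.I * hbar * (Real.sqrt (2*hbar/m) : ℝ) * k₀ * k
      - (hbar : ℂ) * (k₀ : ℂ)^2 + (((v₁+f₁ : ℝ) : ℂ) + Complex.I * ((v₂+f₂ : ℝ) : ℂ))) :
    k = Complex.I * (Real.sqrt (2*m/hbar) : ℝ) * k₀ ∧
    s = -Complex.I * (k₀ : ℂ)^2 - Complex.I * (((v₁+f₁)/hbar : ℝ) : ℂ) + (((v₂+f₂)/hbar : ℝ) : ℂ) ∧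
    (v₂ + f₂ ≤ 0 → s.re ≤ 0) :=
  stmt_6_general hbar m k₀ v₁ f₁ v₂ f₂ hhbar hm k s h1 h2
end

section
/- Let ħ, m, k₀ > 0 and V + f ∈ ℂ with imaginary part v₂ + f₂. Suppose k ∈ ℂ satisfies (ħ²/(2m))k² = (ħ²k₀²/(2m))·(3ik + k₀)/(ik + 3k₀) with ik + 3k₀ ≠ 0. Then k = i k₀ (a double root), and the corresponding s determined by iħs = −(ħ²/(2m))k² + (V+f) satisfies s = −i(ħ/(2m))k₀² − i(v₁+f₁)/ħ + (v₂+f₂)/ħ; hence Re(s) ≤ 0 whenever v₂ + f₂ ≤ 0. -/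
/-!
Clearing the denominator, the dispersion relation becomes `i (k - i k₀)³ = 0`, so `k = i k₀` is its
only root. Substituting `k² = -k₀²` into the equation for `s` and dividing by `i ħ` gives `s`
explicitly; its real part is `(v₂ + f₂) / ħ`.
-/

open Complex

lemma eq_I_mul_of_sq_eq_div {k a : ℂ} (hne : I * k + 3 * a ≠ 0)
    (h : k ^ 2 = a ^ 2 * (3 * I * k + a) / (I * k + 3 * a)) : k = I * a := by
  rw [eq_div_iff hne] at h
  have hcube : (k - I * a) ^ 3 = 0 := by
    linear_combination (-I) * h + (k ^ 3 - I * a ^ 3) * I_sq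
  exact sub_eq_zero.mp (pow_eq_zero_iff three_ne_zero |>.mp hcube)

lemma eq_of_I_mul_mul_eq {ħ m a v w : ℝ} {s : ℂ} (hħ : ħ ≠ 0)
    (hs : I * ħ * s = -((ħ ^ 2 / (2 * m) : ℝ) : ℂ) * (I * a) ^ 2 + ((v : ℂ) + I * (w : ℂ))) :
    s = -I * ((ħ / (2 * m) : ℝ) : ℂ) * (a : ℂ) ^ 2 - I * ((v / ħ : ℝ) : ℂ) + ((w / ħ : ℝ) : ℂ) := by
  have hħC : (ħ : ℂ) ≠ 0 := ofReal_ne_zero.mpr hħ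
  apply mul_left_cancel₀ (mul_ne_zero I_ne_zero hħC)
  have hcoef : ((ħ ^ 2 / (2 * m) : ℝ) : ℂ) = ħ * ((ħ / (2 * m) : ℝ) : ℂ) := by push_cast; ring
  rw [hs, hcoef]
  push_cast
  field_simp
  linear_combination (2 * (v : ℂ)) * I_sq

lemma re_neg_I_mul_sub_I_mul_add_ofReal (c a x y : ℝ) :
    (-I * (c : ℂ) * (a : ℂ) ^ 2 - I * (x : ℂ) + (y : ℂ)).re = y := by
  simp [← ofReal_pow]

theorem stmt_7_general (hbar m k₀ v₁ f₁ v₂ f₂ : ℝ) (hhbar : 0 < hbar) (hm : 0 < m)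
    (k s : ℂ)
    (hne : Complex.I * k + 3 * k₀ ≠ 0)
    (hk : ((hbar^2/(2*m) : ℝ) : ℂ) * k^2 =
      ((hbar^2*k₀^2/(2*m) : ℝ) : ℂ) * (3*Complex.I*k + k₀) / (Complex.I*k + 3*k₀))
    (hs : Complex.I * hbar * s = -((hbar^2/(2*m) : ℝ) : ℂ) * k^2 +
      (((v₁+f₁ : ℝ) : ℂ) + Complex.I * ((v₂+f₂ : ℝ) : ℂ))) :
    k = Complex.I * k₀ ∧
    s = -Complex.I * ((hbar/(2*m) : ℝ) : ℂ) * (k₀ : ℂ)^2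
        - Complex.I * (((v₁+f₁)/hbar : ℝ) : ℂ) + (((v₂+f₂)/hbar : ℝ) : ℂ) ∧
    (v₂ + f₂ ≤ 0 → s.re ≤ 0) := by
  have hcoef : ((hbar ^ 2 / (2 * m) : ℝ) : ℂ) ≠ 0 := by exact_mod_cast by positivity
  have hk_root : k = I * k₀ := by
    refine eq_I_mul_of_sq_eq_div hne (mul_left_cancel₀ hcoef ?_)
    rw [hk]
    push_cast
    ring
  have hs_val := eq_of_I_mul_mul_eq hhbar.ne' (hk_root ▸ hs)
  refine ⟨hk_root, hs_val, fun hle => ?_⟩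
  rw [hs_val, re_neg_I_mul_sub_I_mul_add_ofReal]
  exact div_nonpos_of_nonpos_of_nonneg hle hhbar.le

theorem stmt_7 (hbar m k₀ v₁ f₁ v₂ f₂ : ℝ) (hhbar : 0 < hbar) (hm : 0 < m) (hk₀ : 0 < k₀)
    (k s : ℂ)
    (hne : Complex.I * k + 3 * k₀ ≠ 0)
    (hk : ((hbar^2/(2*m) : ℝ) : ℂ) * k^2 =
      ((hbar^2*k₀^2/(2*m) : ℝ) : ℂ) * (3*Complex.I*k + k₀) / (Complex.I*k + 3*k₀))
    (hs : Complex.I * hbar * s = -((hbar^2/(2*m) : ℝ) : ℂ) * k^2 +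
      (((v₁+f₁ : ℝ) : ℂ) + Complex.I * ((v₂+f₂ : ℝ) : ℂ))) :
    k = Complex.I * k₀ ∧
    s = -Complex.I * ((hbar/(2*m) : ℝ) : ℂ) * (k₀ : ℂ)^2
        - Complex.I * (((v₁+f₁)/hbar : ℝ) : ℂ) + (((v₂+f₂)/hbar : ℝ) : ℂ) ∧
    (v₂ + f₂ ≤ 0 → s.re ≤ 0) :=
  stmt_7_general hbar m k₀ v₁ f₁ v₂ f₂ hhbar hm k s hne hk hs
end

section
/- If V(x) and f(|ψ|²) are real-valued (so v₂ + f₂ = 0), then every normal-mode eigenvalue s arising from the second-order boundary dispersion system (iħs = −(ħ²/(2m))k² + V + f and iħs = −iħ√(2ħ/m)k₀k − ħk₀² + V + f with ħ, m, k₀ > 0) is purely imaginary: Re(s) = 0. -/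
/-!
Eliminating `s` between the two relations gives a quadratic in `k` whose discriminant vanishes
because `(√(2ħ/m))² m = 2ħ`, so its root `k` is purely imaginary. Then `k²` is real, and the
first relation says that `iħs` is real, i.e. `Re s = 0`.
-/

open Complex

theorem Complex.re_eq_zero_of_I_mul_ofReal_mul_eq_ofReal {a x : ℝ} (ha : a ≠ 0) {s : ℂ}
    (h : I * a * s = x) : s.re = 0 := by
  have him := congrArg Complex.im h
  simp only [mul_im, mul_re, I_re, I_im, ofReal_re, ofReal_im] at him
  simpa [ha] using him

theorem boundary_dispersion_wavenumber_eq {hbar m k₀ Vf : ℝ} (hhbar : 0 < hbar) (hm : 0 < m)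
    {k s : ℂ}
    (h1 : I * hbar * s = -((hbar^2/(2*m) : ℝ) : ℂ) * k^2 + (Vf : ℂ))
    (h2 : I * hbar * s = -I * hbar * (Real.sqrt (2*hbar/m) : ℝ) * k₀ * k
      - (hbar : ℂ) * (k₀ : ℂ)^2 + (Vf : ℂ)) :
    k = I * ((Real.sqrt (2*hbar/m) * k₀ * m / hbar : ℝ) : ℂ) := by
  set c := Real.sqrt (2*hbar/m)
  have hc : (c : ℂ)^2 * m = 2 * hbar := by
    exact_mod_cast (show c^2 * m = 2 * hbar by
      rw [Real.sq_sqrt (by positivity)]; field_simp)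
  have hm' : (m : ℂ) ≠ 0 := by exact_mod_cast hm.ne'
  have hhbar' : (hbar : ℂ) ≠ 0 := by exact_mod_cast hhbar.ne'
  push_cast at h1 ⊢
  have hsq : ((hbar : ℂ) * k - I * c * k₀ * m)^2 = 0 := by
    field_simp at h1
    linear_combination h1 - 2 * m * h2 - (k₀^2 * m) * hc + (c^2 * k₀^2 * m^2) * I_sq
  field_simp
  linear_combination (pow_eq_zero_iff two_ne_zero).mp hsq

theorem stmt_9_general (hbar m k₀ Vf : ℝ) (hhbar : 0 < hbar) (hm : 0 < m)
    (k s : ℂ)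
    (h1 : Complex.I * hbar * s = -((hbar^2/(2*m) : ℝ) : ℂ) * k^2 + (Vf : ℂ))
    (h2 : Complex.I * hbar * s = -Complex.I * hbar * (Real.sqrt (2*hbar/m) : ℝ) * k₀ * k
      - (hbar : ℂ) * (k₀ : ℂ)^2 + (Vf : ℂ)) :
    s.re = 0 := by
  obtain ⟨r, hr⟩ : ∃ r : ℝ, k = I * r := ⟨_, boundary_dispersion_wavenumber_eq hhbar hm h1 h2⟩
  have hk : k^2 = ((-r^2 : ℝ) : ℂ) := by
    rw [hr]
    push_cast
    linear_combination r^2 * I_sq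
  refine re_eq_zero_of_I_mul_ofReal_mul_eq_ofReal hhbar.ne' (x := hbar^2/(2*m) * r^2 + Vf) ?_
  rw [h1, hk]
  push_cast
  ring

theorem stmt_9 (hbar m k₀ Vf : ℝ) (hhbar : 0 < hbar) (hm : 0 < m) (hk₀ : 0 < k₀)
    (k s : ℂ)
    (h1 : Complex.I * hbar * s = -((hbar^2/(2*m) : ℝ) : ℂ) * k^2 + (Vf : ℂ))
    (h2 : Complex.I * hbar * s = -Complex.I * hbar * (Real.sqrt (2*hbar/m) : ℝ) * k₀ * k
      - (hbar : ℂ) * (k₀ : ℂ)^2 + (Vf : ℂ)) :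
    s.re = 0 :=
  stmt_9_general hbar m k₀ Vf hhbar hm k s h1 h2
end
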